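/- Let S be a minimum-makespan schedule of jobs with processing times p_1,…,p_n > 0 on m identical machines, and let a new job J_{n+1} with processing time p_{n+1} > 0 arrive. Let M_ℓ be a machine with minimum completion time in S, and let S_rec be the schedule assigning jobs J_1,…,J_n as in S and job J_{n+1} to M_ℓ. Then C_max(S_rec) = max{C_ℓ(S) + p_{n+1}, C_max(S)} ≤ 2·C*_max(m, (p_1,…,p_{n+1})). -/
import Mathlib


open Finset

/-- Completion time (load) of machine `i` under schedule `σ` and processing times `p`. -/
noncomputable def mLoad {n m : ℕ} (p : Fin n → ℝ) (σ : Fin n → Fin m) (i : Fin m) : ℝ :=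
  ∑ j ∈ Finset.univ.filter (fun j => σ j = i), p j

/-- Makespan of schedule `σ`: the maximum machine completion time. -/
noncomputable def makespan {n m : ℕ} (p : Fin n → ℝ) (σ : Fin n → Fin m) : ℝ :=
  ⨆ i, mLoad p σ i

/-- Minimum makespan of the jobs with processing times `p` on `m` machines. -/
noncomputable def optMakespan {n : ℕ} (m : ℕ) (p : Fin n → ℝ) : ℝ :=
  ⨅ σ : Fin n → Fin m, makespan p σ

lemma mLoad_eq_sum_ite {n m : ℕ} (p : Fin n → ℝ) (σ : Fin n → Fin m) (i : Fin m) :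
    mLoad p σ i = ∑ j, if σ j = i then p j else 0 :=
  Finset.sum_filter _ _

lemma mLoad_nonneg {n m : ℕ} {p : Fin n → ℝ} (hp : ∀ j, 0 ≤ p j) (σ : Fin n → Fin m)
    (i : Fin m) : 0 ≤ mLoad p σ i :=
  Finset.sum_nonneg fun j _ => hp j

lemma sum_mLoad {n m : ℕ} (p : Fin n → ℝ) (σ : Fin n → Fin m) :
    ∑ i, mLoad p σ i = ∑ j, p j := by
  simp only [mLoad_eq_sum_ite]
  rw [Finset.sum_comm]
  simp

lemma mLoad_le_makespan {n m : ℕ} (p : Fin n → ℝ) (σ : Fin n → Fin m) (i : Fin m) :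
    mLoad p σ i ≤ makespan p σ :=
  le_ciSup (Set.Finite.bddAbove (Set.finite_range _)) i

lemma makespan_le {n m : ℕ} [Nonempty (Fin m)] {p : Fin n → ℝ} {σ : Fin n → Fin m} {a : ℝ}
    (h : ∀ i, mLoad p σ i ≤ a) : makespan p σ ≤ a :=
  ciSup_le h

lemma makespan_nonneg {n m : ℕ} [Nonempty (Fin m)] {p : Fin n → ℝ} (hp : ∀ j, 0 ≤ p j)
    (σ : Fin n → Fin m) : 0 ≤ makespan p σ :=
  le_trans (mLoad_nonneg hp σ (Classical.arbitrary _)) (mLoad_le_makespan _ _ _)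

lemma optMakespan_le {n m : ℕ} [Nonempty (Fin m)] {p : Fin n → ℝ} (hp : ∀ j, 0 ≤ p j)
    (σ : Fin n → Fin m) : optMakespan m p ≤ makespan p σ :=
  ciInf_le ⟨0, by rintro x ⟨τ, rfl⟩; exact makespan_nonneg hp τ⟩ σ

lemma le_optMakespan {n m : ℕ} [Nonempty (Fin m)] {p : Fin n → ℝ} {a : ℝ}
    (h : ∀ σ : Fin n → Fin m, a ≤ makespan p σ) : a ≤ optMakespan m p :=
  le_ciInf h

lemma mLoad_snoc {n m : ℕ} (p : Fin n → ℝ) (σ : Fin n → Fin m) (pnew : ℝ) (ℓ : Fin m)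
    (i : Fin m) :
    mLoad (Fin.snoc p pnew) (Fin.snoc σ ℓ) i =
      mLoad p σ i + (if ℓ = i then pnew else 0) := by
  simp only [mLoad_eq_sum_ite]
  rw [Fin.sum_univ_castSucc]
  simp [Fin.snoc_castSucc, Fin.snoc_last]

/-- recovery after a new job arrival: assigning the new job to a machine of
minimum completion time of a minimum-makespan schedule gives makespan
`max (C_ℓ(S) + p_{n+1}) (C_max S)`, which is at most `2·C*_max(m, p ++ p_{n+1})`. -/
theorem stmt8 (n m : ℕ) (hm : 0 < m) (p : Fin n → ℝ) (hp : ∀ j, 0 < p j)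
    (σ : Fin n → Fin m) (hσ : makespan p σ = optMakespan m p)
    (pnew : ℝ) (hpnew : 0 < pnew)
    (ℓ : Fin m) (hℓ : ∀ i, mLoad p σ ℓ ≤ mLoad p σ i) :
    makespan (Fin.snoc p pnew) (Fin.snoc σ ℓ) =
        max (mLoad p σ ℓ + pnew) (makespan p σ) ∧
      makespan (Fin.snoc p pnew) (Fin.snoc σ ℓ) ≤
        2 * optMakespan m (Fin.snoc p pnew) := by
  haveI : Nonempty (Fin m) := ⟨⟨0, hm⟩⟩
  set q : Fin (n + 1) → ℝ := Fin.snoc p pnew with hq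
  set τ : Fin (n + 1) → Fin m := Fin.snoc σ ℓ with hτ
  have hq0 : ∀ j, 0 < q j := by
    intro j
    induction j using Fin.lastCases with
    | last => simp [hq, hpnew]
    | cast k => simp [hq, hp k]
  have hq0' : ∀ j, 0 ≤ q j := fun j => (hq0 j).le
  have hp0' : ∀ j, 0 ≤ p j := fun j => (hp j).le
  -- equality part
  have heq : makespan q τ = max (mLoad p σ ℓ + pnew) (makespan p σ) := by
    apply le_antisymm
    · apply makespan_le
      intro i
      rw [mLoad_snoc]
      by_cases h : ℓ = i
      · subst h
        simp only [if_pos rfl]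
        exact le_max_left _ _
      · simp only [if_neg h, add_zero]
        exact le_trans (mLoad_le_makespan p σ i) (le_max_right _ _)
    · apply max_le
      · have := mLoad_le_makespan q τ ℓ
        rwa [mLoad_snoc, if_pos rfl] at this
      · apply makespan_le
        intro i
        have := mLoad_le_makespan q τ i
        rw [mLoad_snoc] at this
        refine le_trans ?_ this
        by_cases h : ℓ = i <;> simp [h, hpnew.le]
  -- lower bounds on optMakespan m q
  have havg : ∀ (k : ℕ) (r : Fin k → ℝ), (∑ j, r j) / m ≤ optMakespan m r := by
    intro k r
    apply le_optMakespan
    intro σ'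
    rw [div_le_iff₀ (by exact_mod_cast hm)]
    calc ∑ j, r j = ∑ i, mLoad r σ' i := (sum_mLoad r σ').symm
      _ ≤ ∑ _i : Fin m, makespan r σ' := Finset.sum_le_sum fun i _ => mLoad_le_makespan r σ' i
      _ = makespan r σ' * m := by simp [mul_comm]
  have hpnew_le : pnew ≤ optMakespan m q := by
    apply le_optMakespan
    intro σ'
    refine le_trans ?_ (mLoad_le_makespan q σ' (σ' (Fin.last n)))
    have : q (Fin.last n) ≤ mLoad q σ' (σ' (Fin.last n)) := by
      apply Finset.single_le_sum (f := q) (fun j _ => hq0' j)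
      simp
    simpa [hq] using this
  have hopt_mono : optMakespan m p ≤ optMakespan m q := by
    apply le_optMakespan
    intro σ'
    refine le_trans (optMakespan_le hp0' (σ' ∘ Fin.castSucc)) (makespan_le ?_)
    intro i
    refine le_trans ?_ (mLoad_le_makespan q σ' i)
    rw [mLoad_eq_sum_ite, mLoad_eq_sum_ite, Fin.sum_univ_castSucc]
    have : (0:ℝ) ≤ if σ' (Fin.last n) = i then q (Fin.last n) else 0 := by
      split <;> simp [hq0' (Fin.last n)]
    refine le_trans ?_ (le_add_of_nonneg_right this)
    apply le_of_eq
    apply Finset.sum_congr rfl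
    intro j _
    simp [hq, Function.comp]
  have hopt_nonneg : 0 ≤ optMakespan m q :=
    le_optMakespan fun σ' => makespan_nonneg hq0' σ'
  -- ℓ has load ≤ average
  have hℓ_avg : mLoad p σ ℓ ≤ (∑ j, p j) / m := by
    rw [le_div_iff₀ (by exact_mod_cast hm)]
    calc mLoad p σ ℓ * m = ∑ _i : Fin m, mLoad p σ ℓ := by simp [mul_comm]
      _ ≤ ∑ i, mLoad p σ i := Finset.sum_le_sum fun i _ => hℓ i
      _ = ∑ j, p j := sum_mLoad p σ
  have hsum_le : (∑ j, p j) ≤ ∑ j, q j := by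
    rw [Fin.sum_univ_castSucc (f := q)]
    have : ∀ j : Fin n, q (Fin.castSucc j) = p j := fun j => by simp [hq]
    simp [this]
    simpa [hq] using hpnew.le
  refine ⟨heq, ?_⟩
  rw [heq]
  apply max_le
  · have h1 : mLoad p σ ℓ ≤ optMakespan m q := by
      refine le_trans hℓ_avg (le_trans ?_ (havg (n+1) q))
      gcongr
    linarith [hpnew_le]
  · rw [hσ]
    linarith
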